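/- arXiv:2212.10128 — 3 statements merged into one kernel-verified Lean document; each statement's English description precedes it below -/
import Mathlib

section
/- For any λ ∈ ℂ and any finite subset A of ℂ, there exists a finite subset B of ℚ[λ] with |B| = |A| and |B + λ·B| ≤ |A + λ·A|. -/
/-!
Let `K = ℚ(λ)`. Since `K` is infinite, some `K`-linear functional `φ : ℂ → K` is injective on
the finite set `A`, and multiplying by a common denominator `d` of the values `φ a` gives a
`K`-linear map `f = d • φ : ℂ → ℂ` that is injective on `A` and sends `A` into `ℚ[λ]`. Being
additive and commuting with multiplication by `λ`, `f` maps `A + λ • A` onto `f A + λ • f A`,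
so `B = f A` works.
-/

open scoped Pointwise

theorem Module.exists_dual_injOn (K : Type*) {V : Type*} [Field K] [Infinite K]
    [AddCommGroup V] [Module K V] {A : Set V} (hA : A.Finite) :
    ∃ φ : Module.Dual K V, Set.InjOn φ A := by
  have : Finite A := hA
  obtain ⟨φ, hφ⟩ := Module.exists_dual_forall_apply_ne_zero (K := K)
    (fun p : {p : A × A // p.1 ≠ p.2} ↦ (p.1.1 : V) - p.1.2)
    fun p ↦ sub_ne_zero.mpr (Subtype.coe_injective.ne p.2)
  refine ⟨φ, fun x hx y hy hxy ↦ by_contra fun hne ↦ ?_⟩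
  exact hφ ⟨(⟨x, hx⟩, ⟨y, hy⟩), by simpa using hne⟩ (by simp [hxy])

theorem IntermediateField.exists_ne_zero_forall_mul_mem_algebraAdjoin {F E : Type*} [Field F]
    [Field E] [Algebra F E] {S : Set E} (s : Finset E) (hs : ∀ b ∈ s, b ∈ adjoin F S) :
    ∃ d ∈ Algebra.adjoin F S, d ≠ 0 ∧ ∀ b ∈ s, d * b ∈ Algebra.adjoin F S := by
  classical
  induction s using Finset.induction with
  | empty => exact ⟨1, one_mem _, one_ne_zero, by simp⟩
  | insert b s _ ih =>
    obtain ⟨d, hd, hd0, hds⟩ := ih fun x hx ↦ hs x (Finset.mem_insert_of_mem hx)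
    obtain ⟨r, hr, e, he, rfl⟩ := mem_adjoin_iff_div.mp (hs b (Finset.mem_insert_self b s))
    by_cases he0 : e = 0
    · exact ⟨d, hd, hd0, by simpa [he0] using hds⟩
    refine ⟨d * e, mul_mem hd he, mul_ne_zero hd0 he0, ?_⟩
    rintro x hx
    rcases Finset.mem_insert.mp hx with rfl | hx
    · rw [mul_assoc, mul_div_cancel₀ _ he0]
      exact mul_mem hd hr
    · rw [mul_right_comm]
      exact mul_mem (hds x hx) he

theorem Finset.card_image_add_smul_image_le {F V W S : Type*} [FunLike F V W] [Add V] [Add W]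
    [AddHomClass F V W] [SMul S V] [SMul S W] [DecidableEq V] [DecidableEq W]
    (f : F) (c : S) (hf : ∀ x, f (c • x) = c • f x) (A : Finset V) :
    (A.image f + c • A.image f).card ≤ (A + c • A).card := by
  rw [← image_smul_comm f c A hf, ← image_add]
  exact card_image_le

theorem krachun_petrov_reduction (lam : ℂ) (A : Finset ℂ) :
    ∃ B : Finset ℂ, (B : Set ℂ) ⊆ (Algebra.adjoin ℚ {lam} : Subalgebra ℚ ℂ) ∧
      B.card = A.card ∧ (B + lam • B).card ≤ (A + lam • A).card := by
  classical
  set K := IntermediateField.adjoin ℚ {lam}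
  obtain ⟨φ, hφ⟩ := Module.exists_dual_injOn K A.finite_toSet
  obtain ⟨d, -, hd0, hd⟩ :=
    IntermediateField.exists_ne_zero_forall_mul_mem_algebraAdjoin (F := ℚ) (S := {lam})
      (A.image fun a ↦ (φ a : ℂ)) (by simp)
  let f : ℂ →ₗ[K] ℂ := d • (Algebra.linearMap K ℂ ∘ₗ φ)
  have hf_lam (x : ℂ) : f (lam • x) = lam • f x :=
    map_smul f (⟨lam, IntermediateField.mem_adjoin_simple_self ℚ lam⟩ : K) x
  have hf_inj : Set.InjOn f A := fun x hx y hy hxy ↦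
    hφ hx hy (Subtype.coe_injective (mul_left_cancel₀ hd0 hxy))
  refine ⟨A.image f, ?_, Finset.card_image_of_injOn hf_inj,
    Finset.card_image_add_smul_image_le f lam hf_lam A⟩
  simpa [Set.subset_def, f] using hd
end

section
/- Let V be the ℚ-vector space with basis {e_1, e_2, ...} and let Φ : V → V be the linear shift map e_k ↦ e_{k+1}. For any finite A ⊆ V with |A + Φ(A)| ≤ K|A| for some K > 0, one has |(A + Φ(A)) + Φ(A + Φ(A))| ≤ K^{10}|A|. -/
open scoped Pointwise

/-- The shift map `e_k ↦ e_{k+1}` on finitely supported rational sequences. -/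
noncomputable def shiftMap : (ℕ →₀ ℚ) → (ℕ →₀ ℚ) :=
  Finsupp.embDomain ⟨Nat.succ, Nat.succ_injective⟩

lemma shiftMap_injective : Function.Injective shiftMap :=
  Finsupp.embDomain_injective _

lemma shiftMap_image_add (S T : Finset (ℕ →₀ ℚ)) :
    (S + T).image shiftMap = S.image shiftMap + T.image shiftMap := by
  have hco : shiftMap =
      ⇑(Finsupp.embDomain.addMonoidHom (M := ℚ) ⟨Nat.succ, Nat.succ_injective⟩) := rfl
  rw [hco, Finset.image_add]

lemma shiftMap_image_card (S : Finset (ℕ →₀ ℚ)) :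
    (S.image shiftMap).card = S.card :=
  Finset.card_image_of_injective _ shiftMap_injective

/-- Pure real-arithmetic combination of the triangle inequalities. -/
lemma aux_real (a c n3 x y T K : ℝ) (ha : 0 < a) (hc0 : 0 ≤ c) (hn30 : 0 ≤ n3)
    (hx0 : 0 ≤ x) (hy0 : 0 ≤ y) (hac : a ≤ c) (hcK : c ≤ K * a)
    (hn3 : n3 * a ^ 2 ≤ c ^ 3) (t1 : x * a ≤ c * n3) (t2 : y * a ≤ c * x)
    (t3 : T * a ≤ x * y) : T ≤ K ^ 10 * a := by
  have hK1 : 1 ≤ K := by nlinarith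
  have hK0 : 0 < K := lt_of_lt_of_le one_pos hK1
  have hx3 : x * a ^ 3 ≤ c ^ 4 := by
    calc x * a ^ 3 = (x * a) * a ^ 2 := by ring
      _ ≤ (c * n3) * a ^ 2 := by gcongr
      _ = c * (n3 * a ^ 2) := by ring
      _ ≤ c * c ^ 3 := by gcongr
      _ = c ^ 4 := by ring
  have hy4 : y * a ^ 4 ≤ c ^ 5 := by
    calc y * a ^ 4 = (y * a) * a ^ 3 := by ring
      _ ≤ (c * x) * a ^ 3 := by gcongr
      _ = c * (x * a ^ 3) := by ring
      _ ≤ c * c ^ 4 := by gcongr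
      _ = c ^ 5 := by ring
  have key : T * a ^ 9 ≤ c ^ 9 * a := by
    calc T * a ^ 9 = (T * a) * (a ^ 4 * a ^ 4) := by ring
      _ ≤ (x * y) * (a ^ 4 * a ^ 4) := by gcongr
      _ = ((x * a ^ 3) * a) * (y * a ^ 4) := by ring
      _ ≤ (c ^ 4 * a) * c ^ 5 := by gcongr
      _ = c ^ 9 * a := by ring
  have h1 : T * a ^ 9 ≤ (K ^ 9 * a) * a ^ 9 := by
    calc T * a ^ 9 ≤ c ^ 9 * a := key
      _ ≤ (K * a) ^ 9 * a := by gcongr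
      _ = (K ^ 9 * a) * a ^ 9 := by ring
  have hT : T ≤ K ^ 9 * a := le_of_mul_le_mul_right h1 (by positivity)
  calc T ≤ K ^ 9 * a := hT
    _ ≤ K ^ 10 * a := by
      have hKp : K ^ 9 ≤ K ^ 10 := pow_le_pow_right₀ hK1 (by norm_num)
      gcongr

theorem pluennecke_ruzsa_type (A : Finset (ℕ →₀ ℚ)) (K : ℝ) (hK : 0 < K)
    (h : ((A + A.image shiftMap).card : ℝ) ≤ K * A.card) :
    (((A + A.image shiftMap) + (A + A.image shiftMap).image shiftMap).card : ℝ) ≤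
      K ^ 10 * A.card := by
  classical
  obtain rfl | hA := A.eq_empty_or_nonempty
  · simp
  set B := A.image shiftMap with hBdef
  have hBne : B.Nonempty := hA.image _
  have hBA : B.card = A.card := by rw [hBdef, shiftMap_image_card]
  have haN : 0 < A.card := hA.card_pos
  have hBBB : B + (B + B) = 3 • B := by
    rw [show (3 : ℕ) = 2 + 1 from rfl, add_nsmul, two_nsmul, one_nsmul, add_comm]
  -- ℕ-level inequalities
  have hacN : A.card ≤ (A + B).card := Finset.card_le_card_add_right hBne
  -- Plünnecke–Ruzsa at ℚ≥0 level, cleared of denominators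
  have hn3N : (3 • B).card * A.card ^ 2 ≤ (A + B).card ^ 3 := by
    have hPR := Finset.pluennecke_ruzsa_inequality_nsmul_add (A := A) hA B 3
    have ha0 : ((A.card : ℚ≥0)) ≠ 0 := by exact_mod_cast haN.ne'
    have hq : ((3 • B).card * A.card ^ 2 : ℚ≥0) ≤ ((A + B).card ^ 3 : ℚ≥0) := by
      calc ((3 • B).card * A.card ^ 2 : ℚ≥0)
          ≤ ((((A + B).card : ℚ≥0) / A.card) ^ 3 * A.card) * A.card ^ 2 := by gcongr
        _ = ((A + B).card ^ 3 : ℚ≥0) := by field_simp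
    exact_mod_cast hq
  have t1N : (A + B + B).card * A.card ≤ (A + B).card * (3 • B).card := by
    have := Finset.ruzsa_triangle_inequality_add_add_add A B (B + B)
    rw [← add_assoc, hBBB, hBA] at this
    exact this
  have t2N : (A + (A + B)).card * A.card ≤ (A + B).card * (A + B + B).card := by
    have := Finset.ruzsa_triangle_inequality_add_add_add A B (A + B)
    rw [add_comm B (A + B), hBA] at this
    exact this
  have t3N : ((A + B) + (A + B).image shiftMap).card * A.card ≤
      (A + B + B).card * (A + (A + B)).card := by
    have := Finset.ruzsa_triangle_inequality_add_add_add (A + B) B ((A + B).image shiftMap)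
    have him : B + (A + B).image shiftMap = (A + (A + B)).image shiftMap := by
      rw [shiftMap_image_add A (A + B), ← hBdef]
    rw [him, hBA, shiftMap_image_card] at this
    exact this
  -- pass to the reals
  refine aux_real (A.card : ℝ) ((A + B).card : ℝ) ((3 • B).card : ℝ)
    ((A + B + B).card : ℝ) ((A + (A + B)).card : ℝ) _ K
    (by exact_mod_cast haN) (by positivity) (by positivity) (by positivity) (by positivity)
    (by exact_mod_cast hacN) h (by exact_mod_cast hn3N) (by exact_mod_cast t1N)
    (by exact_mod_cast t2N) (by exact_mod_cast t3N)
end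

section
/- For any finite subsets A, B of ℚ^∞ (finitely supported sequences) and any coordinate k, the compressions satisfy |C_k(A) + C_k(B)| ≤ |A + B|. -/
open scoped Pointwise

/-- The compression of a finite set `A ⊆ ℚ^∞` along coordinate `k`: each fiber of the
projection forgetting coordinate `k` is replaced by the fiber with `k`-th coordinates
`0, 1, …, (fiber size − 1)`. -/
noncomputable def compressAlong (k : ℕ) (A : Finset (ℕ →₀ ℚ)) : Finset (ℕ →₀ ℚ) :=
  (A.image (fun a => Finsupp.update a k 0)).biUnion (fun x =>
    (Finset.range ((A.filter (fun a => Finsupp.update a k 0 = x)).card)).image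
      (fun m : ℕ => Finsupp.update x k ((m : ℚ))))

namespace CompressionAux

/-- The projection forgetting coordinate `k`. -/
noncomputable def pr (k : ℕ) (a : ℕ →₀ ℚ) : ℕ →₀ ℚ := Finsupp.update a k 0

lemma pr_add (k : ℕ) (a b : ℕ →₀ ℚ) : pr k (a + b) = pr k a + pr k b := by
  ext j
  rcases eq_or_ne j k with rfl | h <;>
    simp [pr, Finsupp.coe_update, Function.update_apply, *]

lemma pr_update (k : ℕ) (x : ℕ →₀ ℚ) (q : ℚ) :
    pr k (Finsupp.update x k q) = pr k x := by
  simp [pr, Finsupp.update_idem]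

lemma pr_idem (k : ℕ) (x : ℕ →₀ ℚ) : pr k (pr k x) = pr k x :=
  pr_update k x 0

lemma eq_update_of_pr_eq {k : ℕ} {s z : ℕ →₀ ℚ} (h : pr k s = z) :
    s = Finsupp.update z k (s k) := by
  subst h
  simp [pr, Finsupp.update_idem, Finsupp.update_self]

lemma update_apply_self (k : ℕ) (z : ℕ →₀ ℚ) (q : ℚ) :
    (Finsupp.update z k q) k = q := by
  simp [Finsupp.coe_update]

lemma injOn_apply {k : ℕ} {z : ℕ →₀ ℚ} {S : Finset (ℕ →₀ ℚ)} :
    Set.InjOn (fun s : ℕ →₀ ℚ => s k) (S.filter (fun s => pr k s = z)) := by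
  intro s hs t ht h
  simp only [Finset.coe_filter, Set.mem_setOf_eq] at hs ht
  rw [eq_update_of_pr_eq hs.2, eq_update_of_pr_eq ht.2]
  simp only at h
  rw [h]

lemma mem_compress {k : ℕ} {A : Finset (ℕ →₀ ℚ)} {u : ℕ →₀ ℚ} :
    u ∈ compressAlong k A ↔ ∃ a ∈ A, ∃ m : ℕ,
      m < (A.filter (fun a' => pr k a' = pr k a)).card ∧
      u = Finsupp.update (pr k a) k (m : ℚ) := by
  simp only [compressAlong, Finset.mem_biUnion, Finset.mem_image, Finset.mem_range, pr]
  constructor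
  · rintro ⟨x, ⟨a, ha, rfl⟩, m, hm, rfl⟩
    exact ⟨a, ha, m, hm, rfl⟩
  · rintro ⟨a, ha, m, hm, rfl⟩
    exact ⟨_, ⟨a, ha, rfl⟩, m, hm, rfl⟩

lemma pr_of_mem_compress {k : ℕ} {A : Finset (ℕ →₀ ℚ)} {u : ℕ →₀ ℚ}
    (hu : u ∈ compressAlong k A) : ∃ a ∈ A, pr k u = pr k a := by
  obtain ⟨a, ha, m, _, rfl⟩ := mem_compress.1 hu
  exact ⟨a, ha, by rw [pr_update, pr_idem]⟩

/-- The fiber of the fiberwise sumset inside the sumset of the fibers. -/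
lemma fiber_card_le (k : ℕ) (A B : Finset (ℕ →₀ ℚ)) (z : ℕ →₀ ℚ)
    (hz : ∃ s ∈ compressAlong k A + compressAlong k B, pr k s = z) :
    ((compressAlong k A + compressAlong k B).filter (fun s => pr k s = z)).card
      ≤ ((A + B).filter (fun s => pr k s = z)).card := by
  classical
  set S := compressAlong k A + compressAlong k B with hS
  have hSzne : (S.filter (fun s => pr k s = z)).Nonempty := by
    obtain ⟨s, hs, hsz⟩ := hz
    exact ⟨s, Finset.mem_filter.2 ⟨hs, hsz⟩⟩
  obtain ⟨s₀, hs₀, hmax⟩ :=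
    Finset.exists_max_image (S.filter (fun s => pr k s = z)) (fun s => s k) hSzne
  have hs₀S := (Finset.mem_filter.1 hs₀).1
  have hs₀z : pr k s₀ = z := (Finset.mem_filter.1 hs₀).2
  rw [hS, Finset.mem_add] at hs₀S
  obtain ⟨u, hu, v, hv, huv⟩ := hs₀S
  obtain ⟨a, ha, m, hm, hue⟩ := mem_compress.1 hu
  obtain ⟨b, hb, n, hn, hve⟩ := mem_compress.1 hv
  set x := pr k a with hx
  set y := pr k b with hy
  have hxy : x + y = z := by
    rw [← hs₀z, ← huv, pr_add, hue, hve, pr_update, pr_update, pr_idem, pr_idem]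
  have hs₀k : s₀ k = ((m + n : ℕ) : ℚ) := by
    rw [← huv, hue, hve, Finsupp.add_apply, update_apply_self, update_apply_self]
    push_cast; ring
  -- Step 1: the fiber of S over z has at most m + n + 1 elements.
  have step1 : (S.filter (fun s => pr k s = z)).card ≤ m + n + 1 := by
    have hsub : S.filter (fun s => pr k s = z) ⊆
        (Finset.range (m + n + 1)).image (fun j : ℕ => Finsupp.update z k (j : ℚ)) := by
      intro s hs
      have hsS := (Finset.mem_filter.1 hs).1
      have hsz : pr k s = z := (Finset.mem_filter.1 hs).2
      rw [hS, Finset.mem_add] at hsS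
      obtain ⟨u', hu', v', hv', hs'⟩ := hsS
      obtain ⟨a', _, m', _, hue'⟩ := mem_compress.1 hu'
      obtain ⟨b', _, n', _, hve'⟩ := mem_compress.1 hv'
      have hsk : s k = ((m' + n' : ℕ) : ℚ) := by
        rw [← hs', hue', hve', Finsupp.add_apply, update_apply_self, update_apply_self]
        push_cast; ring
      have hle : s k ≤ s₀ k := hmax s hs
      rw [hsk, hs₀k, Nat.cast_le] at hle
      refine Finset.mem_image.2 ⟨m' + n', Finset.mem_range.2 (by omega), ?_⟩
      rw [← hsk]
      exact (eq_update_of_pr_eq hsz).symm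
    calc (S.filter (fun s => pr k s = z)).card
        ≤ _ := Finset.card_le_card hsub
      _ ≤ (Finset.range (m + n + 1)).card := Finset.card_image_le
      _ = m + n + 1 := Finset.card_range _
  -- Step 2: m + n + 1 ≤ |A_x| + |B_y| - 1
  -- Step 3: |A_x| + |B_y| - 1 ≤ |(A+B)_z| via Cauchy-Davenport in ℚ.
  set SA := (A.filter (fun a' => pr k a' = x)).image (fun a' : ℕ →₀ ℚ => a' k) with hSA
  set SB := (B.filter (fun b' => pr k b' = y)).image (fun b' : ℕ →₀ ℚ => b' k) with hSB
  have hSAcard : SA.card = (A.filter (fun a' => pr k a' = x)).card :=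
    Finset.card_image_of_injOn injOn_apply
  have hSBcard : SB.card = (B.filter (fun b' => pr k b' = y)).card :=
    Finset.card_image_of_injOn injOn_apply
  have hSAne : SA.Nonempty :=
    ⟨a k, Finset.mem_image.2 ⟨a, Finset.mem_filter.2 ⟨ha, rfl⟩, rfl⟩⟩
  have hSBne : SB.Nonempty :=
    ⟨b k, Finset.mem_image.2 ⟨b, Finset.mem_filter.2 ⟨hb, rfl⟩, rfl⟩⟩
  have hCD : SA.card + SB.card - 1 ≤ (SA + SB).card :=
    cauchy_davenport_add_of_linearOrder_isCancelAdd hSAne hSBne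
  have hsub2 : SA + SB ⊆ ((A + B).filter (fun s => pr k s = z)).image
      (fun s : ℕ →₀ ℚ => s k) := by
    intro q hq
    rw [Finset.mem_add] at hq
    obtain ⟨qa, hqa, qb, hqb, hq⟩ := hq
    obtain ⟨a', ha', rfl⟩ := Finset.mem_image.1 hqa
    obtain ⟨b', hb', rfl⟩ := Finset.mem_image.1 hqb
    have ha'A := (Finset.mem_filter.1 ha').1
    have ha'x : pr k a' = x := (Finset.mem_filter.1 ha').2
    have hb'B := (Finset.mem_filter.1 hb').1
    have hb'y : pr k b' = y := (Finset.mem_filter.1 hb').2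
    refine Finset.mem_image.2 ⟨a' + b', Finset.mem_filter.2
      ⟨Finset.add_mem_add ha'A hb'B, by rw [pr_add, ha'x, hb'y, hxy]⟩, ?_⟩
    rw [← hq, Finsupp.add_apply]
  have himg : (((A + B).filter (fun s => pr k s = z)).image
      (fun s : ℕ →₀ ℚ => s k)).card = ((A + B).filter (fun s => pr k s = z)).card :=
    Finset.card_image_of_injOn injOn_apply
  have step3 : SA.card + SB.card - 1 ≤ ((A + B).filter (fun s => pr k s = z)).card := by
    calc SA.card + SB.card - 1 ≤ (SA + SB).card := hCD
      _ ≤ _ := Finset.card_le_card hsub2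
      _ = _ := himg
  rw [hSAcard] at step3
  rw [hSBcard] at step3
  have hmx : m < (A.filter (fun a' => pr k a' = x)).card := hm
  have hny : n < (B.filter (fun b' => pr k b' = y)).card := hn
  omega

end CompressionAux

open CompressionAux in
theorem compression_sumset (k : ℕ) (A B : Finset (ℕ →₀ ℚ)) :
    (compressAlong k A + compressAlong k B).card ≤ (A + B).card := by
  classical
  set S := compressAlong k A + compressAlong k B with hS
  set T := A + B with hT
  have hScard : S.card = ∑ z ∈ S.image (pr k), (S.filter (fun s => pr k s = z)).card :=
    Finset.card_eq_sum_card_fiberwise (fun s hs => Finset.mem_image_of_mem _ hs)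
  have hTcard : T.card = ∑ z ∈ T.image (pr k), (T.filter (fun s => pr k s = z)).card :=
    Finset.card_eq_sum_card_fiberwise (fun s hs => Finset.mem_image_of_mem _ hs)
  have hsub : S.image (pr k) ⊆ T.image (pr k) := by
    intro z hz
    obtain ⟨s, hs, rfl⟩ := Finset.mem_image.1 hz
    rw [hS, Finset.mem_add] at hs
    obtain ⟨u, hu, v, hv, rfl⟩ := hs
    obtain ⟨a, ha, hua⟩ := pr_of_mem_compress hu
    obtain ⟨b, hb, hvb⟩ := pr_of_mem_compress hv
    refine Finset.mem_image.2 ⟨a + b, Finset.add_mem_add ha hb, ?_⟩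
    rw [pr_add, pr_add, hua, hvb]
  rw [hScard, hTcard]
  calc ∑ z ∈ S.image (pr k), (S.filter (fun s => pr k s = z)).card
      ≤ ∑ z ∈ S.image (pr k), (T.filter (fun s => pr k s = z)).card := by
        refine Finset.sum_le_sum (fun z hz => ?_)
        obtain ⟨s, hs, hsz⟩ := Finset.mem_image.1 hz
        exact fiber_card_le k A B z ⟨s, hs, hsz⟩
    _ ≤ ∑ z ∈ T.image (pr k), (T.filter (fun s => pr k s = z)).card :=
        Finset.sum_le_sum_of_subset hsub
end
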